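/- Let k be a positive integer and A ⊆ ℕ with 0 ∈ A, and set X := A + k·ℕ (the sumset of A with the multiples of k). Then there exists N such that nX = (n+1)X for all n ≥ N, where nX denotes the n-fold sumset of X. -/
import Mathlib


open Pointwise

/-- `nsum X n` is the `n`-fold sumset of `X ⊆ ℕ`, with `nsum X 0 = {0}`. -/
def nsum (X : Set ℕ) : ℕ → Set ℕ
  | 0 => {0}
  | n + 1 => nsum X n + X

theorem stmt_10 (k : ℕ) (hk : 0 < k) (A : Set ℕ) (hA : (0 : ℕ) ∈ A)
    (X : Set ℕ) (hX : X = A + {m : ℕ | ∃ n : ℕ, m = k * n}) :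
    ∃ N : ℕ, ∀ n ≥ N, nsum X n = nsum X (n + 1) := by
  have h0X : (0:ℕ) ∈ X := by
    rw [hX]; exact ⟨0, hA, 0, ⟨0, by simp⟩, by simp⟩
  have hstep : ∀ n, nsum X n ⊆ nsum X (n+1) := by
    intro n x hx
    exact ⟨x, hx, 0, h0X, by simp⟩
  have hmono : ∀ m n, m ≤ n → nsum X m ⊆ nsum X n := by
    intro m n h
    induction h with
    | refl => exact fun x hx => hx
    | step _ ih => exact fun x hx => hstep _ (ih hx)
  -- X is closed under adding k
  have hXk : ∀ x ∈ X, x + k ∈ X := by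
    intro x hx
    rw [hX] at hx ⊢
    obtain ⟨a, ha, b, ⟨j, hj⟩, hab⟩ := hx
    have hab' : a + b = x := hab
    exact ⟨a, ha, b + k, ⟨j + 1, by rw [hj]; ring⟩, by show a + (b + k) = x + k; omega⟩
  have hshiftk : ∀ n, 1 ≤ n → ∀ x ∈ nsum X n, x + k ∈ nsum X n := by
    intro n hn x hx
    obtain ⟨m, rfl⟩ : ∃ m, n = m + 1 := ⟨n - 1, by omega⟩
    obtain ⟨s, hs, t, ht, hst⟩ := hx
    have hst' : s + t = x := hst
    exact ⟨s, hs, t + k, hXk t ht, by show s + (t + k) = x + k; omega⟩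
  have hshift : ∀ n, 1 ≤ n → ∀ x ∈ nsum X n, ∀ j, x + k * j ∈ nsum X n := by
    intro n hn x hx j
    induction j with
    | zero => simpa using hx
    | succ j ih =>
      have := hshiftk n hn _ ih
      have he : x + k * (j + 1) = x + k * j + k := by ring
      rw [he]; exact this
  -- the union
  set T : Set ℕ := {x | ∃ n, x ∈ nsum X n} with hT
  -- for each residue r, minimal element of T in that class, and a stage where it appears
  set C : ℕ → Set ℕ := fun r => {x | x ∈ T ∧ x % k = r} with hC
  set M : ℕ → ℕ := fun r => sInf {n | sInf (C r) ∈ nsum X n} with hM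
  refine ⟨1 + (Finset.range k).sup M, ?_⟩
  intro n hn
  apply Set.Subset.antisymm (hstep n)
  intro x hx
  -- x ∈ T
  have hxT : x ∈ T := ⟨n + 1, hx⟩
  set r := x % k with hr
  have hrk : r < k := Nat.mod_lt _ hk
  have hCne : (C r).Nonempty := ⟨x, hxT, rfl⟩
  have hmmem : sInf (C r) ∈ C r := Nat.sInf_mem hCne
  obtain ⟨hmT, hmr⟩ := hmmem
  obtain ⟨n', hn'⟩ := hmT
  have hsetne : {n | sInf (C r) ∈ nsum X n}.Nonempty := ⟨n', hn'⟩
  have hMmem : sInf (C r) ∈ nsum X (M r) := Nat.sInf_mem hsetne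
  have hMle : M r ≤ n := by
    have : M r ≤ (Finset.range k).sup M :=
      Finset.le_sup (Finset.mem_range.mpr hrk)
    omega
  have hmem : sInf (C r) ∈ nsum X n := hmono _ _ hMle hMmem
  have hle : sInf (C r) ≤ x := Nat.sInf_le ⟨hxT, rfl⟩
  have hdvd : k ∣ x - sInf (C r) := by
    have h1 : sInf (C r) % k = x % k := by rw [hmr]
    exact (Nat.modEq_iff_dvd' hle).mp h1
  obtain ⟨j, hj⟩ := hdvd
  have hx' : x = sInf (C r) + k * j := by omega
  rw [hx']
  exact hshift n (by omega) _ hmem j
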